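/- Let a₁, a₂, b₁, b₂, c be real with a₁ > 0, a₂ > 0, c - a₁ - a₂ > 0 and c - a₂ > 0, and let x, y be real with |x| < 1 and |y| < 1. Then F₃(a₁, a₂; b₁, b₂; c; x, y) = [Γ(c) / (Γ(a₁) Γ(a₂) Γ(c-a₁-a₂))] · ∫_0^1 ∫_0^1 u^{a₁-1} v^{a₂-1} (1-u)^{c-a₂-a₁-1} (1-v)^{c-a₂-1} (1 - y v)^{-b₂} (1 - x u + x u v)^{-b₁} du dv. -/

import Mathlib

open Real intervalIntegral

/-- The Pochhammer symbol `(a)_k = a(a+1)⋯(a+k-1) = Γ(a+k)/Γ(a)`. -/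
noncomputable def poch (a : ℝ) (k : ℕ) : ℝ := ∏ i ∈ Finset.range k, (a + (i : ℝ))

/-- The Beta function `B(x,y) = Γ(x)Γ(y)/Γ(x+y)`. -/
noncomputable def Beta2 (x y : ℝ) : ℝ := Real.Gamma x * Real.Gamma y / Real.Gamma (x + y)

/-- Extended Beta function `B(x,y,z) = Γ(x)Γ(y)Γ(z)/Γ(x+y+z)`. -/
noncomputable def Beta3 (x y z : ℝ) : ℝ :=
  Real.Gamma x * Real.Gamma y * Real.Gamma z / Real.Gamma (x + y + z)

/-- The third Appell hypergeometric function
`F₃(a₁,a₂; b₁,b₂; c; x,y) = Σ_{i,j} (a₁)_i(a₂)_j(b₁)_i(b₂)_j/((c)_{i+j} i! j!) xⁱ yʲ`. -/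
noncomputable def F3 (a₁ a₂ b₁ b₂ c x y : ℝ) : ℝ :=
  ∑' (i : ℕ) (j : ℕ),
    poch a₁ i * poch a₂ j * poch b₁ i * poch b₂ j /
      (poch c (i + j) * (Nat.factorial i : ℝ) * (Nat.factorial j : ℝ)) * x ^ i * y ^ j

/-
Write the integrand as the Beta weight `u^(a₁-1) (1-u)^(c-a₂-a₁-1)` times
`v^(a₂-1) (1-v)^(c-a₂-1) (1-yv)^(-b₂) (1 - xu(1-v))^(-b₁)`. Expanding `(1 - xu(1-v))^(-b₁)` and
then `(1-yv)^(-b₂)` by the binomial series and integrating term by term (the coefficient series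
converge absolutely, the powers of `u`, `v`, `1-v` are bounded by `1`, and the Beta weights are
integrable) turns the double integral into
`Σ_{i,j} (b₁)_i (b₂)_j / (i! j!) xⁱ yʲ B(a₁+i, c-a₂-a₁) B(a₂+j, c-a₂+i)`.
The Gamma factors of the two Beta values telescope, and together with the prefactor they leave
`(a₁)_i (a₂)_j / (c)_{i+j}`.
-/

open MeasureTheory Set

lemma poch_succ (a : ℝ) (k : ℕ) : poch a (k + 1) = poch a k * (a + k) :=
  Finset.prod_range_succ _ _

lemma poch_pos {a : ℝ} (ha : 0 < a) (k : ℕ) : 0 < poch a k :=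
  Finset.prod_pos fun _ _ => by positivity

lemma Gamma_add_nat_eq_poch_mul_Gamma {a : ℝ} (ha : 0 < a) (k : ℕ) :
    Gamma (a + k) = poch a k * Gamma a := by
  induction k with
  | zero => simp [poch]
  | succ k ih =>
    rw [Nat.cast_succ, ← add_assoc, Gamma_add_one (by positivity), ih, poch_succ]
    ring

lemma poch_eq_ascPochhammer_eval (a : ℝ) (k : ℕ) : poch a k = (ascPochhammer ℝ k).eval a := by
  induction k with
  | zero => simp [poch]
  | succ k ih => rw [poch_succ, ih, ascPochhammer_succ_eval]

lemma choose_add_sub_one_eq_poch_div_factorial (a : ℝ) (k : ℕ) :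
    Ring.choose (a + k - 1) k = poch a k / k.factorial := by
  rw [Ring.choose_eq_smul, Polynomial.descPochhammer_smeval_eq_ascPochhammer,
    Polynomial.ascPochhammer_smeval_eq_eval, poch_eq_ascPochhammer_eval, smul_eq_mul]
  ring_nf

theorem hasSum_poch_div_factorial_mul_pow (b : ℝ) {t : ℝ} (ht : |t| < 1) :
    HasSum (fun k : ℕ => poch b k / k.factorial * t ^ k) ((1 - t) ^ (-b)) := by
  have h := (Real.one_div_one_sub_rpow_hasFPowerSeriesOnBall_zero b).hasSum
    (y := t) (by simpa [enorm_eq_nnnorm, ← NNReal.coe_lt_coe] using ht)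
  simp only [FormalMultilinearSeries.ofScalars_apply_eq, smul_eq_mul,
    choose_add_sub_one_eq_poch_div_factorial, zero_add] at h
  rwa [Real.rpow_neg (by linarith [le_abs_self t]), ← one_div]

lemma abs_poch_le_poch_abs (b : ℝ) (k : ℕ) : |poch b k| ≤ poch |b| k := by
  rw [poch, poch, Finset.abs_prod]
  exact Finset.prod_le_prod (fun _ _ => abs_nonneg _) fun i _ =>
    (abs_add_le _ _).trans_eq (by rw [Nat.abs_cast])

lemma summable_abs_poch_div_factorial_mul_pow (b : ℝ) {t : ℝ} (ht : |t| < 1) :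
    Summable fun k : ℕ => |poch b k / k.factorial * t ^ k| := by
  refine .of_nonneg_of_le (fun _ => abs_nonneg _) (fun k => ?_)
    (hasSum_poch_div_factorial_mul_pow |b| (by rwa [abs_abs])).summable
  rw [abs_mul, abs_div, abs_pow, Nat.abs_cast]
  gcongr
  exact abs_poch_le_poch_abs b k

section Interchange

variable {α : Type*} [MeasurableSpace α] {μ : Measure α} {W g : α → ℝ}

theorem integral_mul_tsum_mul_pow (hW : Integrable W μ) (hg : AEStronglyMeasurable g μ)
    (hg_le : ∀ᵐ t ∂μ, |g t| ≤ 1) {A : ℕ → ℝ} (hA : Summable fun i => |A i|) :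
    ∫ t, W t * ∑' i, A i * g t ^ i ∂μ = ∑' i, A i * ∫ t, W t * g t ^ i ∂μ := by
  have hpow_le : ∀ i, ∀ᵐ t ∂μ, ‖g t ^ i‖ ≤ 1 := fun i => hg_le.mono fun t ht => by
    rw [norm_pow, Real.norm_eq_abs]; exact pow_le_one₀ (abs_nonneg _) ht
  have hint : ∀ i, Integrable (fun t => W t * g t ^ i) μ := fun i =>
    hW.mul_bdd (hg.pow i) (hpow_le i)
  have hnorm : ∀ i, ∫ t, ‖A i * (W t * g t ^ i)‖ ∂μ ≤ |A i| * ∫ t, ‖W t‖ ∂μ := fun i => by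
    rw [← MeasureTheory.integral_const_mul]
    refine integral_mono_ae ((hint i).const_mul (A i)).norm (hW.norm.const_mul _) ?_
    filter_upwards [hpow_le i] with t ht
    rw [norm_mul, norm_mul, Real.norm_eq_abs (A i)]
    gcongr
    exact mul_le_of_le_one_right (norm_nonneg _) ht
  simp_rw [← tsum_mul_left, ← MeasureTheory.integral_const_mul, mul_left_comm (W _)]
  exact (integral_tsum_of_summable_integral_norm (fun i => (hint i).const_mul (A i))
    (.of_nonneg_of_le (fun _ => integral_nonneg fun _ => norm_nonneg _) hnorm
      (hA.mul_right _))).symm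

theorem integral_mul_one_sub_mul_rpow_neg (hW : Integrable W μ) (hg : AEStronglyMeasurable g μ)
    (hg_le : ∀ᵐ t ∂μ, |g t| ≤ 1) (b : ℝ) {z : ℝ} (hz : |z| < 1) :
    ∫ t, W t * (1 - z * g t) ^ (-b) ∂μ =
      ∑' k, poch b k / k.factorial * z ^ k * ∫ t, W t * g t ^ k ∂μ := by
  rw [← integral_mul_tsum_mul_pow hW hg hg_le (summable_abs_poch_div_factorial_mul_pow b hz)]
  refine integral_congr_ae (hg_le.mono fun t ht => ?_)
  have hzg : |z * g t| < 1 := by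
    rw [abs_mul]; exact (mul_le_of_le_one_right (abs_nonneg z) ht).trans_lt hz
  simp only [← (hasSum_poch_div_factorial_mul_pow b hzg).tsum_eq, mul_pow, mul_assoc]

lemma norm_integral_mul_pow_le (hW : Integrable W μ) (hg_le : ∀ᵐ t ∂μ, |g t| ≤ 1) (n : ℕ) :
    ‖∫ t, W t * g t ^ n ∂μ‖ ≤ ∫ t, ‖W t‖ ∂μ :=
  norm_integral_le_of_norm_le hW.norm <| hg_le.mono fun t ht => by
    rw [norm_mul, norm_pow, Real.norm_eq_abs (g t)]
    exact mul_le_of_le_one_right (norm_nonneg _) (pow_le_one₀ (abs_nonneg _) ht)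

end Interchange

noncomputable def betaKernel (p q t : ℝ) : ℝ := t ^ (p - 1) * (1 - t) ^ (q - 1)

lemma betaKernel_mul_pow {p q t : ℝ} (ht : 0 < t) (n : ℕ) :
    betaKernel p q t * t ^ n = betaKernel (p + n) q t := by
  rw [betaKernel, betaKernel, ← Real.rpow_natCast, mul_right_comm, ← Real.rpow_add ht]
  ring_nf

lemma betaKernel_mul_one_sub_pow {p q t : ℝ} (ht : t < 1) (n : ℕ) :
    betaKernel p q t * (1 - t) ^ n = betaKernel p (q + n) t := by
  rw [betaKernel, betaKernel, ← Real.rpow_natCast, mul_assoc, ← Real.rpow_add (by linarith)]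
  ring_nf

lemma ofReal_betaKernel (p q : ℝ) {t : ℝ} (ht : t ∈ Icc (0:ℝ) 1) :
    (betaKernel p q t : ℂ) = (t : ℂ) ^ ((p : ℂ) - 1) * (1 - (t : ℂ)) ^ ((q : ℂ) - 1) := by
  rw [betaKernel, Complex.ofReal_mul, Complex.ofReal_cpow ht.1,
    Complex.ofReal_cpow (by linarith [ht.2])]
  push_cast
  rfl

lemma integrableOn_betaKernel {p q : ℝ} (hp : 0 < p) (hq : 0 < q) :
    IntegrableOn (betaKernel p q) (Ioo 0 1) := by
  have h := (Complex.betaIntegral_convergent (u := p) (v := q) (by simpa) (by simpa)).1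
  have h' : IntegrableOn (fun t => (betaKernel p q t : ℂ)) (Ioc 0 1) :=
    h.congr_fun (fun t ht => (ofReal_betaKernel p q ⟨ht.1.le, ht.2⟩).symm) measurableSet_Ioc
  exact (IntegrableOn.mono_set h'.re Ioo_subset_Ioc_self).congr_fun
    (fun t _ => Complex.ofReal_re _) measurableSet_Ioo

lemma integral_betaKernel {p q : ℝ} (hp : 0 < p) (hq : 0 < q) :
    ∫ t in Ioo 0 1, betaKernel p q t = Beta2 p q := by
  have h : ((∫ t in Ioo 0 1, betaKernel p q t : ℝ) : ℂ) = Complex.betaIntegral p q := by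
    rw [← integral_complex_ofReal, Complex.betaIntegral,
      intervalIntegral.integral_of_le zero_le_one, ← integral_Ioc_eq_integral_Ioo]
    exact setIntegral_congr_fun measurableSet_Ioc fun t ht => ofReal_betaKernel p q ⟨ht.1.le, ht.2⟩
  rw [Complex.betaIntegral_eq_Gamma_mul_div _ _ (by simpa) (by simpa), ← Complex.ofReal_add,
    Complex.Gamma_ofReal, Complex.Gamma_ofReal, Complex.Gamma_ofReal] at h
  exact_mod_cast h

lemma integrableOn_betaKernel_mul {p q : ℝ} (hp : 0 < p) (hq : 0 < q) {h : ℝ → ℝ}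
    (hh : ContinuousOn h (Icc 0 1)) :
    IntegrableOn (fun t => betaKernel p q t * h t) (Ioo 0 1) :=
  (integrableOn_betaKernel hp hq).mul_continuousOn_of_subset hh measurableSet_Ioo isCompact_Icc
    Ioo_subset_Icc_self

lemma integral_betaKernel_mul_pow {p q : ℝ} (hp : 0 < p) (hq : 0 < q) (n : ℕ) :
    ∫ t in Ioo 0 1, betaKernel p q t * t ^ n = Beta2 (p + n) q := by
  rw [setIntegral_congr_fun measurableSet_Ioo fun t ht => betaKernel_mul_pow ht.1 n,
    integral_betaKernel (by positivity) hq]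

lemma ae_restrict_Ioo_abs_le_one : ∀ᵐ t ∂(volume.restrict (Ioo (0:ℝ) 1)), |t| ≤ 1 :=
  ae_restrict_of_forall_mem measurableSet_Ioo fun t ht => abs_le.2 ⟨by linarith [ht.1], ht.2.le⟩

lemma ae_restrict_Ioo_abs_one_sub_le_one :
    ∀ᵐ t ∂(volume.restrict (Ioo (0:ℝ) 1)), |1 - t| ≤ 1 :=
  ae_restrict_of_forall_mem measurableSet_Ioo fun t ht =>
    abs_le.2 ⟨by linarith [ht.2], by linarith [ht.1]⟩

lemma integral_betaKernel_mul_tsum_mul_pow {p q : ℝ} (hp : 0 < p) (hq : 0 < q) {A : ℕ → ℝ}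
    (hA : Summable fun i => |A i|) :
    ∫ t in Ioo 0 1, betaKernel p q t * ∑' i, A i * t ^ i = ∑' i, A i * Beta2 (p + i) q :=
  (integral_mul_tsum_mul_pow (g := fun t => t) (integrableOn_betaKernel hp hq)
    aestronglyMeasurable_id ae_restrict_Ioo_abs_le_one hA).trans
    (tsum_congr fun i => by rw [integral_betaKernel_mul_pow hp hq])

/-- Euler's integral for `₂F₁`, with the hypergeometric series left unsummed. -/
theorem integral_betaKernel_mul_one_sub_mul_rpow_neg {p q : ℝ} (hp : 0 < p) (hq : 0 < q) (b : ℝ)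
    {y : ℝ} (hy : |y| < 1) :
    ∫ t in Ioo 0 1, betaKernel p q t * (1 - y * t) ^ (-b) =
      ∑' k, poch b k / k.factorial * y ^ k * Beta2 (p + k) q :=
  (integral_mul_one_sub_mul_rpow_neg (g := fun t => t) (integrableOn_betaKernel hp hq)
    aestronglyMeasurable_id ae_restrict_Ioo_abs_le_one b hy).trans
    (tsum_congr fun k => by rw [integral_betaKernel_mul_pow hp hq])

lemma integral_betaKernel_mul_rpow_mul_one_sub_pow {p q : ℝ} (hp : 0 < p) (hq : 0 < q) (b : ℝ)
    {y : ℝ} (hy : |y| < 1) (n : ℕ) :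
    ∫ t in Ioo 0 1, betaKernel p q t * (1 - y * t) ^ (-b) * (1 - t) ^ n =
      ∑' k, poch b k / k.factorial * y ^ k * Beta2 (p + k) (q + n) := by
  rw [← integral_betaKernel_mul_one_sub_mul_rpow_neg hp (by positivity) b hy]
  refine setIntegral_congr_fun measurableSet_Ioo fun t ht => ?_
  rw [← betaKernel_mul_one_sub_pow ht.2]
  ring

lemma continuousOn_one_sub_mul_rpow {y : ℝ} (hy : |y| < 1) (b : ℝ) :
    ContinuousOn (fun t => (1 - y * t) ^ b) (Icc 0 1) :=
  (show ContinuousOn (fun t => 1 - y * t) (Icc 0 1) by fun_prop).rpow_const fun t ht => by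
    have : y * t ≤ |y| := (le_abs_self _).trans <| by
      rw [abs_mul, abs_of_nonneg ht.1]; exact mul_le_of_le_one_right (abs_nonneg y) ht.2
    left; linarith

section F3Integral

variable {a₁ a₂ b₁ b₂ c x y : ℝ}

lemma F3_integrand_eq_betaKernel_mul (u v : ℝ) :
    u ^ (a₁ - 1) * v ^ (a₂ - 1) * (1 - u) ^ (c - a₂ - a₁ - 1) * (1 - v) ^ (c - a₂ - 1) *
        (1 - y * v) ^ (-b₂) * (1 - x * u + x * u * v) ^ (-b₁) =
      betaKernel a₁ (c - a₂ - a₁) u *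
        (betaKernel a₂ (c - a₂) v * (1 - y * v) ^ (-b₂) * (1 - x * u * (1 - v)) ^ (-b₁)) := by
  rw [betaKernel, betaKernel, show 1 - x * u + x * u * v = 1 - x * u * (1 - v) by ring]
  ring

theorem integral_integral_F3_integrand_eq_tsum_tsum (h1 : 0 < a₁) (h2 : 0 < a₂)
    (hq : 0 < c - a₂ - a₁) (hx : |x| < 1) (hy : |y| < 1) :
    ∫ u in (0:ℝ)..1, ∫ v in (0:ℝ)..1,
        u ^ (a₁ - 1) * v ^ (a₂ - 1) * (1 - u) ^ (c - a₂ - a₁ - 1) * (1 - v) ^ (c - a₂ - 1) *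
          (1 - y * v) ^ (-b₂) * (1 - x * u + x * u * v) ^ (-b₁) =
      ∑' i, ∑' j, (poch b₁ i / i.factorial * x ^ i * Beta2 (a₁ + i) (c - a₂ - a₁)) *
        (poch b₂ j / j.factorial * y ^ j * Beta2 (a₂ + j) (c - a₂ + i)) := by
  have h4 : 0 < c - a₂ := by linarith
  set W : ℝ → ℝ := fun v => betaKernel a₂ (c - a₂) v * (1 - y * v) ^ (-b₂)
  have hW : IntegrableOn W (Ioo 0 1) :=
    integrableOn_betaKernel_mul h2 h4 (continuousOn_one_sub_mul_rpow hy _)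
  set K : ℕ → ℝ := fun i => ∫ v in Ioo 0 1, W v * (1 - v) ^ i
  have hK_le (i : ℕ) : |K i| ≤ ∫ v in Ioo 0 1, ‖W v‖ :=
    norm_integral_mul_pow_le hW ae_restrict_Ioo_abs_one_sub_le_one i
  have hinner : ∀ u ∈ Ioo (0:ℝ) 1, ∫ v in (0:ℝ)..1,
      betaKernel a₁ (c - a₂ - a₁) u * (W v * (1 - x * u * (1 - v)) ^ (-b₁)) =
        betaKernel a₁ (c - a₂ - a₁) u *
          ∑' i, poch b₁ i / i.factorial * x ^ i * K i * u ^ i := by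
    intro u hu
    have hxu : |x * u| < 1 := by
      rw [abs_mul, abs_of_pos hu.1]; nlinarith [abs_nonneg x, hu.2]
    rw [intervalIntegral.integral_const_mul, intervalIntegral.integral_of_le zero_le_one,
      integral_Ioc_eq_integral_Ioo]
    congr 1
    exact (integral_mul_one_sub_mul_rpow_neg (g := fun v => 1 - v) hW (by fun_prop)
      ae_restrict_Ioo_abs_one_sub_le_one b₁ hxu).trans (tsum_congr fun i => by ring)
  simp_rw [F3_integrand_eq_betaKernel_mul]
  rw [intervalIntegral.integral_of_le zero_le_one, integral_Ioc_eq_integral_Ioo,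
    setIntegral_congr_fun measurableSet_Ioo hinner, integral_betaKernel_mul_tsum_mul_pow h1 hq]
  · refine tsum_congr fun i => ?_
    rw [show K i = _ from integral_betaKernel_mul_rpow_mul_one_sub_pow h2 h4 b₂ hy i,
      mul_right_comm, ← tsum_mul_left]
  · refine .of_nonneg_of_le (fun _ => abs_nonneg _) (fun i => ?_)
      ((summable_abs_poch_div_factorial_mul_pow b₁ hx).mul_right (∫ v in Ioo 0 1, ‖W v‖))
    rw [abs_mul]
    exact mul_le_mul_of_nonneg_left (hK_le i) (abs_nonneg _)

end F3Integral

lemma Gamma_div_mul_Beta2_mul_Beta2 {a₁ a₂ c : ℝ} (h1 : 0 < a₁) (h2 : 0 < a₂)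
    (h3 : 0 < c - a₁ - a₂) (i j : ℕ) :
    Gamma c / (Gamma a₁ * Gamma a₂ * Gamma (c - a₁ - a₂)) *
        (Beta2 (a₁ + i) (c - a₂ - a₁) * Beta2 (a₂ + j) (c - a₂ + i)) =
      poch a₁ i * poch a₂ j / poch c (i + j) := by
  have hc : 0 < c := by linarith
  have hc₂ : 0 < c - a₂ := by linarith
  rw [Beta2, Beta2, show a₁ + i + (c - a₂ - a₁) = c - a₂ + i by ring,
    show a₂ + j + (c - a₂ + i) = c + ((i + j : ℕ) : ℝ) by push_cast; ring,
    show c - a₂ - a₁ = c - a₁ - a₂ by ring, Gamma_add_nat_eq_poch_mul_Gamma h1,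
    Gamma_add_nat_eq_poch_mul_Gamma h2, Gamma_add_nat_eq_poch_mul_Gamma hc]
  have := (Gamma_pos_of_pos h1).ne'
  have := (Gamma_pos_of_pos h2).ne'
  have := (Gamma_pos_of_pos h3).ne'
  have := (Gamma_pos_of_pos hc).ne'
  have := (Gamma_pos_of_pos (show 0 < c - a₂ + i by positivity)).ne'
  have := (poch_pos hc (i + j)).ne'
  field_simp

theorem stmt19_general (a₁ a₂ b₁ b₂ c : ℝ) (h1 : 0 < a₁) (h2 : 0 < a₂)
    (h3 : 0 < c - a₁ - a₂)
    (x y : ℝ) (hx : |x| < 1) (hy : |y| < 1) :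
    F3 a₁ a₂ b₁ b₂ c x y
      = (Real.Gamma c / (Real.Gamma a₁ * Real.Gamma a₂ * Real.Gamma (c - a₁ - a₂))) *
          ∫ u in (0:ℝ)..1, ∫ v in (0:ℝ)..1,
            u ^ (a₁ - 1) * v ^ (a₂ - 1) * (1 - u) ^ (c - a₂ - a₁ - 1) *
              (1 - v) ^ (c - a₂ - 1) * (1 - y * v) ^ (-b₂) *
              (1 - x * u + x * u * v) ^ (-b₁) := by
  rw [integral_integral_F3_integrand_eq_tsum_tsum h1 h2 (by linarith) hx hy, F3, ← tsum_mul_left]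
  refine tsum_congr fun i => ?_
  rw [← tsum_mul_left]
  refine tsum_congr fun j => ?_
  have hcoeff := Gamma_div_mul_Beta2_mul_Beta2 h1 h2 h3 i j
  calc _ = poch a₁ i * poch a₂ j / poch c (i + j) *
        (poch b₁ i / i.factorial * x ^ i * (poch b₂ j / j.factorial * y ^ j)) := by ring
    _ = _ := by rw [← hcoeff]; ring

/-- Double Euler-type integral representation of the Appell `F₃` function. -/
theorem stmt19 (a₁ a₂ b₁ b₂ c : ℝ) (h1 : 0 < a₁) (h2 : 0 < a₂)
    (h3 : 0 < c - a₁ - a₂) (h4 : 0 < c - a₂)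
    (x y : ℝ) (hx : |x| < 1) (hy : |y| < 1) :
    F3 a₁ a₂ b₁ b₂ c x y
      = (Real.Gamma c / (Real.Gamma a₁ * Real.Gamma a₂ * Real.Gamma (c - a₁ - a₂))) *
          ∫ u in (0:ℝ)..1, ∫ v in (0:ℝ)..1,
            u ^ (a₁ - 1) * v ^ (a₂ - 1) * (1 - u) ^ (c - a₂ - a₁ - 1) *
              (1 - v) ^ (c - a₂ - 1) * (1 - y * v) ^ (-b₂) *
              (1 - x * u + x * u * v) ^ (-b₁) :=
  stmt19_general a₁ a₂ b₁ b₂ c h1 h2 h3 x y hx hy
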